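/- The Bergman projection P, defined by P(f)(z) = ∫_Δ f(ζ)/(1 - conj(ζ)·z)^2 dm(ζ), is not bounded on L^1(Δ, dm): there is no constant C such that ∫_Δ |P(f)(z)| dm(z) ≤ C ∫_Δ |f(z)| dm(z) for all f ∈ L^1(Δ, dm). -/

import Mathlib

/-!
Test `P` on the indicator of a small disc `B(c, ε) ⊂ Δ`. Since `ζ ↦ (1 - conj ζ · z)⁻²` is
antiholomorphic, the mean value property over discs gives `P(1_{B(c, ε)}) = ε² K_c` with
`K_c(z) = (1 - conj c · z)⁻²`, while `‖1_{B(c, ε)}‖₁ = ε²`; so a bound `C` would force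
`‖K_c‖₁ ≤ C` for every `c ∈ Δ`. But for `r = 1 - 4⁻ᴺ` the kernel `K_r` is at least `1/(16u²)`
on each of the `N` disjoint discs `B(1 - 2u, u)`, `u = 4⁻ʲ` (`1 ≤ j ≤ N`), of normalized area
`u²`, hence `‖K_r‖₁ ≥ N/16`.
-/

open MeasureTheory Metric Set ComplexConjugate
open scoped Real ENNReal NNReal

theorem setIntegral_ball_eq_integral_polar {E : Type*} [NormedAddCommGroup E] [NormedSpace ℝ E]
    (g : ℂ → E) (c : ℂ) (R : ℝ) :
    ∫ ζ in ball c R, g ζ = ∫ p in Ioo 0 R ×ˢ Ioo (-π) π, p.1 • g (circleMap c p.1 p.2) := by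
  have htarget : polarCoord.target ∩ Iio R ×ˢ univ = Ioo 0 R ×ˢ Ioo (-π) π := by
    rw [polarCoord_target, prod_inter_prod, Ioi_inter_Iio, inter_univ]
  have hpolar : ∀ p ∈ polarCoord.target,
      p.1 • (ball 0 R).indicator (fun w ↦ g (c + w)) (Complex.polarCoord.symm p) =
        (Iio R ×ˢ univ).indicator (fun p : ℝ × ℝ ↦ p.1 • g (circleMap c p.1 p.2)) p := by
    rintro ⟨ρ, θ⟩ ⟨hρ : 0 < ρ, -⟩
    have hsymm : Complex.polarCoord.symm (ρ, θ) = circleMap 0 ρ θ := by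
      simp [circleMap, Complex.exp_mul_I]
    have hnorm : ‖circleMap 0 ρ θ‖ = ρ := by simp [abs_of_pos hρ]
    by_cases hρR : ρ < R
    · have hmem : circleMap 0 ρ θ ∈ ball 0 R := by simpa [hnorm]
      rw [hsymm, indicator_of_mem hmem, indicator_of_mem (by simpa)]
      simp [circleMap]
    · have hmem : circleMap 0 ρ θ ∉ ball 0 R := by simpa [hnorm] using hρR
      rw [hsymm, indicator_of_notMem hmem, indicator_of_notMem (by simpa using hρR), smul_zero]
  calc ∫ ζ in ball c R, g ζ = ∫ w in ball 0 R, g (c + w) := by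
        rw [← (measurePreserving_add_left volume c).setIntegral_preimage_emb
          (measurableEmbedding_addLeft c), preimage_add_ball, sub_self]
    _ = ∫ w, (ball 0 R).indicator (fun w ↦ g (c + w)) w :=
        (integral_indicator measurableSet_ball).symm
    _ = ∫ p in polarCoord.target,
          p.1 • (ball 0 R).indicator (fun w ↦ g (c + w)) (Complex.polarCoord.symm p) :=
        (Complex.integral_comp_polarCoord_symm _).symm
    _ = ∫ p in Ioo 0 R ×ˢ Ioo (-π) π, p.1 • g (circleMap c p.1 p.2) := by
        rw [setIntegral_congr_fun polarCoord.open_target.measurableSet hpolar,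
          setIntegral_indicator (measurableSet_Iio.prod MeasurableSet.univ), htarget]

theorem setIntegral_ball_eq_of_circleAverage_eq {E : Type*} [NormedAddCommGroup E]
    [NormedSpace ℝ E] [CompleteSpace E] {g : ℂ → E} {c : ℂ} {R : ℝ} (hR : 0 ≤ R)
    (hg : ContinuousOn g (closedBall c R))
    (hmean : ∀ ρ ∈ Ioo 0 R, Real.circleAverage g c ρ = g c) :
    ∫ ζ in ball c R, g ζ = (π * R ^ 2) • g c := by
  have hintegrable : IntegrableOn (fun p : ℝ × ℝ ↦ p.1 • g (circleMap c p.1 p.2))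
      (Ioo 0 R ×ˢ Ioo (-π) π) (volume.prod volume) := by
    have hmaps : MapsTo (fun p : ℝ × ℝ ↦ circleMap c p.1 p.2)
        (Icc 0 R ×ˢ Icc (-π) π) (closedBall c R) := by
      rintro ⟨ρ, θ⟩ ⟨⟨hρ, hρR⟩, -⟩
      simpa [dist_eq_norm, abs_of_nonneg hρ] using hρR
    refine ContinuousOn.integrableOn_compact (isCompact_Icc.prod isCompact_Icc) ?_
      |>.mono_set (prod_mono Ioo_subset_Icc_self Ioo_subset_Icc_self)
    exact continuousOn_fst.smul (hg.comp (by fun_prop) hmaps)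
  have hcircle : ∀ ρ ∈ Ioo 0 R, ∫ θ in Ioo (-π) π, ρ • g (circleMap c ρ θ) = (2 * π * ρ) • g c := by
    intro ρ hρ
    have hπ : -π ≤ π := by linarith [Real.pi_pos]
    rw [integral_smul, ← integral_Ioc_eq_integral_Ioo, ← intervalIntegral.integral_of_le hπ,
      ← hmean ρ hρ, Real.circleAverage_eq_integral_add (-π),
      intervalIntegral.integral_comp_add_right (fun θ ↦ g (circleMap c ρ θ)), smul_smul,
      zero_add, two_mul, add_neg_cancel_right]
    congr 1
    field_simp
  rw [setIntegral_ball_eq_integral_polar, Measure.volume_eq_prod, setIntegral_prod _ hintegrable,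
    setIntegral_congr_fun measurableSet_Ioo hcircle, integral_smul_const,
    ← integral_Ioc_eq_integral_Ioo, ← intervalIntegral.integral_of_le hR,
    intervalIntegral.integral_const_mul, integral_id]
  congr 1
  ring

theorem DifferentiableOn.setIntegral_ball_eq {E : Type*} [NormedAddCommGroup E]
    [NormedSpace ℂ E] [CompleteSpace E] {g : ℂ → E} {c : ℂ} {R : ℝ}
    (hg : DifferentiableOn ℂ g (closedBall c R)) (hR : 0 ≤ R) :
    ∫ ζ in ball c R, g ζ = (π * R ^ 2) • g c :=
  setIntegral_ball_eq_of_circleAverage_eq hR hg.continuousOn fun ρ hρ ↦ by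
    refine DiffContOnCl.circleAverage (DifferentiableOn.diffContOnCl (hg.mono ?_))
    rw [abs_of_pos hρ.1]
    exact closure_ball_subset_closedBall.trans (closedBall_subset_closedBall hρ.2.le)

noncomputable def normalizedArea : Measure ℂ := (ENNReal.ofReal π)⁻¹ • volume

noncomputable def bergmanKernel (z ζ : ℂ) : ℂ := 1 / (1 - conj ζ * z) ^ 2

noncomputable def bergmanProjection (f : ℂ → ℂ) (z : ℂ) : ℂ :=
  (π : ℂ)⁻¹ * ∫ ζ in ball 0 1, f ζ / (1 - conj ζ * z) ^ 2

theorem normalizedArea_ball (c : ℂ) (r : ℝ) : normalizedArea (ball c r) = ENNReal.ofReal r ^ 2 := by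
  have hπ : ENNReal.ofReal π = NNReal.pi := by
    rw [← NNReal.coe_real_pi, ENNReal.ofReal_coe_nnreal]
  rw [normalizedArea, Measure.smul_apply, Complex.volume_ball, smul_eq_mul, hπ, mul_comm,
    mul_assoc, ENNReal.mul_inv_cancel (by simp [NNReal.pi_ne_zero]) ENNReal.coe_ne_top, mul_one]

theorem setIntegral_ball_bergmanKernel {c z : ℂ} {ε : ℝ} (hε : 0 ≤ ε)
    (hc : closedBall c ε ⊆ ball 0 1) (hz : ‖z‖ ≤ 1) :
    ∫ ζ in ball c ε, bergmanKernel z ζ = (π * ε ^ 2 : ℝ) • bergmanKernel z c := by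
  set g : ℂ → ℂ := fun ζ ↦ 1 / (1 - ζ * conj z) ^ 2
  have hconj : ∀ ζ, bergmanKernel z ζ = conj (g ζ) := fun ζ ↦ by
    simp [bergmanKernel, g, mul_comm]
  have hne : ∀ ζ ∈ closedBall c ε, (1 - ζ * conj z) ^ 2 ≠ 0 := by
    intro ζ hζ
    refine pow_ne_zero 2 (sub_ne_zero.mpr fun h ↦ ?_)
    have : ‖ζ * conj z‖ < 1 := by
      rw [norm_mul, Complex.norm_conj]
      exact mul_lt_one_of_nonneg_of_lt_one_left (norm_nonneg _) (mem_ball_zero_iff.mp (hc hζ)) hz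
    simp [← h] at this
  have hg : DifferentiableOn ℂ g (closedBall c ε) :=
    (differentiableOn_const 1).div (by fun_prop) hne
  simp_rw [hconj]
  rw [integral_conj, hg.setIntegral_ball_eq hε, Complex.real_smul, Complex.real_smul, map_mul,
    Complex.conj_ofReal]

theorem bergmanProjection_indicator_ball {c z : ℂ} {ε : ℝ} (hε : 0 ≤ ε)
    (hc : closedBall c ε ⊆ ball 0 1) (hz : ‖z‖ ≤ 1) :
    bergmanProjection ((ball c ε).indicator 1) z = ε ^ 2 * bergmanKernel z c := by
  have hindicator : ∀ ζ, (ball c ε).indicator 1 ζ / (1 - conj ζ * z) ^ 2 =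
      (ball c ε).indicator (bergmanKernel z) ζ := fun ζ ↦ by
    by_cases h : ζ ∈ ball c ε <;> simp [h, bergmanKernel]
  simp_rw [bergmanProjection, hindicator]
  rw [setIntegral_indicator measurableSet_ball,
    inter_eq_right.mpr (ball_subset_closedBall.trans hc), setIntegral_ball_bergmanKernel hε hc hz,
    Complex.real_smul]
  push_cast
  field_simp

theorem lintegral_bergmanKernel_le_of_bounded {C : ℝ≥0}
    (hC : ∀ f : ℂ → ℂ, IntegrableOn f (ball 0 1) →
      ∫⁻ z in ball 0 1, ‖bergmanProjection f z‖ₑ ∂normalizedArea ≤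
        C * ∫⁻ z in ball 0 1, ‖f z‖ₑ ∂normalizedArea)
    {c : ℂ} (hc : ‖c‖ < 1) :
    ∫⁻ z in ball 0 1, ‖bergmanKernel z c‖ₑ ∂normalizedArea ≤ C := by
  set ε := (1 - ‖c‖) / 2
  have hε : 0 < ε := by simp only [ε]; linarith
  have hsub : closedBall c ε ⊆ ball 0 1 :=
    closedBall_subset_ball' (by rw [dist_zero_right]; simp only [ε]; linarith)
  have hf : IntegrableOn ((ball c ε).indicator 1) (ball 0 1) :=
    (integrableOn_const (C := (1 : ℂ)) measure_ball_lt_top.ne).indicator measurableSet_ball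
  have hP : ∫⁻ z in ball 0 1, ‖bergmanProjection ((ball c ε).indicator 1) z‖ₑ ∂normalizedArea =
      ENNReal.ofReal ε ^ 2 * ∫⁻ z in ball 0 1, ‖bergmanKernel z c‖ₑ ∂normalizedArea := by
    rw [← lintegral_const_mul' _ _ (by simp)]
    refine setLIntegral_congr_fun measurableSet_ball fun z hz ↦ ?_
    rw [bergmanProjection_indicator_ball hε.le hsub (mem_ball_zero_iff.mp hz).le, enorm_mul,
      enorm_pow, ← ofReal_norm, Complex.norm_real, Real.norm_of_nonneg hε.le]
  have hf_norm : ∫⁻ z in ball 0 1, ‖(ball c ε).indicator (1 : ℂ → ℂ) z‖ₑ ∂normalizedArea =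
      ENNReal.ofReal ε ^ 2 := by
    simp_rw [enorm_indicator_eq_indicator_enorm, Pi.one_apply, enorm_one]
    rw [← Pi.one_def, lintegral_indicator_one measurableSet_ball,
      Measure.restrict_apply measurableSet_ball,
      inter_eq_left.mpr (ball_subset_closedBall.trans hsub), normalizedArea_ball]
  have hbound := hC _ hf
  rwa [hP, hf_norm, mul_comm (C : ℝ≥0∞),
    ENNReal.mul_le_mul_iff_right (by simp [hε]) (by simp)] at hbound

theorem norm_lt_of_mem_ball_one_sub_two_mul {u : ℝ} {z : ℂ} (hu : u ≤ 1 / 2)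
    (hz : z ∈ ball ((1 - 2 * u : ℝ) : ℂ) u) : ‖z‖ < 1 - u := by
  have hcenter : ‖((1 - 2 * u : ℝ) : ℂ)‖ = 1 - 2 * u := by
    rw [Complex.norm_real, Real.norm_of_nonneg (by linarith)]
  calc ‖z‖ ≤ ‖z - ((1 - 2 * u : ℝ) : ℂ)‖ + ‖((1 - 2 * u : ℝ) : ℂ)‖ := norm_le_norm_sub_add _ _
    _ < u + (1 - 2 * u) := by rw [hcenter, ← dist_eq_norm]; exact add_lt_add_of_lt_of_le hz le_rfl
    _ = 1 - u := by ring

theorem disjoint_ball_one_sub_two_mul {u v : ℝ} (huv : 3 * v ≤ u) :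
    Disjoint (ball ((1 - 2 * u : ℝ) : ℂ) u) (ball ((1 - 2 * v : ℝ) : ℂ) v) := by
  refine ball_disjoint_ball ?_
  rw [dist_eq_norm, ← Complex.ofReal_sub, Complex.norm_real, Real.norm_eq_abs]
  calc u + v ≤ -(1 - 2 * u - (1 - 2 * v)) := by linarith
    _ ≤ |1 - 2 * u - (1 - 2 * v)| := neg_le_abs _

theorem inv_sixteen_mul_sq_le_norm_bergmanKernel {r u : ℝ} {z : ℂ} (hu : u ≤ 1 / 2)
    (hur : 1 - u ≤ r) (hr : r ≤ 1) (hz : z ∈ ball ((1 - 2 * u : ℝ) : ℂ) u) :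
    (16 * u ^ 2)⁻¹ ≤ ‖bergmanKernel z r‖ := by
  have hu0 : 0 < u := pos_of_mem_ball hz
  have hz1 := norm_lt_of_mem_ball_one_sub_two_mul hu hz
  have hrz : ‖(r : ℂ) * z‖ < 1 := by
    rw [norm_mul, Complex.norm_real, Real.norm_of_nonneg (by linarith)]
    nlinarith [norm_nonneg z]
  have hpos : 0 < ‖1 - (r : ℂ) * z‖ :=
    norm_pos_iff.mpr (sub_ne_zero.mpr fun h ↦ by simp [← h] at hrz)
  have hle : ‖1 - (r : ℂ) * z‖ ≤ 4 * u := by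
    have h1 : ‖1 - z‖ < 3 * u :=
      calc ‖1 - z‖ = ‖((2 * u : ℝ) : ℂ) - (z - ((1 - 2 * u : ℝ) : ℂ))‖ := by push_cast; ring_nf
        _ ≤ ‖((2 * u : ℝ) : ℂ)‖ + ‖z - ((1 - 2 * u : ℝ) : ℂ)‖ := norm_sub_le _ _
        _ < 2 * u + u := by
          rw [Complex.norm_real, Real.norm_of_nonneg (by linarith)]
          linarith [mem_ball_iff_norm.mp hz]
        _ = 3 * u := by ring
    have h2 : ‖((1 - r : ℝ) : ℂ) * z‖ ≤ u := by
      rw [norm_mul, Complex.norm_real, Real.norm_of_nonneg (by linarith)]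
      nlinarith [norm_nonneg z]
    calc ‖1 - (r : ℂ) * z‖ = ‖(1 - z) + ((1 - r : ℝ) : ℂ) * z‖ := by push_cast; ring_nf
      _ ≤ ‖1 - z‖ + ‖((1 - r : ℝ) : ℂ) * z‖ := norm_add_le _ _
      _ ≤ 4 * u := by linarith
  rw [bergmanKernel, Complex.conj_ofReal, norm_div, norm_one, norm_pow, one_div]
  exact inv_anti₀ (pow_pos hpos 2) (by nlinarith)

theorem inv_sixteen_le_setLIntegral_bergmanKernel {r u : ℝ} (hu0 : 0 < u) (hu : u ≤ 1 / 2)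
    (hur : 1 - u ≤ r) (hr : r ≤ 1) :
    16⁻¹ ≤ ∫⁻ z in ball ((1 - 2 * u : ℝ) : ℂ) u, ‖bergmanKernel z r‖ₑ ∂normalizedArea := by
  calc (16⁻¹ : ℝ≥0∞)
      = ∫⁻ _ in ball ((1 - 2 * u : ℝ) : ℂ) u, ENNReal.ofReal (16 * u ^ 2)⁻¹ ∂normalizedArea := by
        rw [setLIntegral_const, normalizedArea_ball, ← ENNReal.ofReal_pow hu0.le,
          ← ENNReal.ofReal_mul (by positivity),
          show (16 * u ^ 2)⁻¹ * u ^ 2 = 16⁻¹ by field_simp, ENNReal.ofReal_inv_of_pos (by norm_num)]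
        norm_num
    _ ≤ ∫⁻ z in ball ((1 - 2 * u : ℝ) : ℂ) u, ‖bergmanKernel z r‖ₑ ∂normalizedArea := by
        refine setLIntegral_mono' measurableSet_ball fun z hz ↦ ?_
        rw [← ofReal_norm]
        exact ENNReal.ofReal_le_ofReal (inv_sixteen_mul_sq_le_norm_bergmanKernel hu hur hr hz)

theorem natCast_div_sixteen_le_lintegral_bergmanKernel (N : ℕ) :
    (N : ℝ≥0∞) / 16 ≤
      ∫⁻ z in ball 0 1, ‖bergmanKernel z (1 - 4⁻¹ ^ N : ℝ)‖ₑ ∂normalizedArea := by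
  set K : ℂ → ℝ≥0∞ := fun z ↦ ‖bergmanKernel z (1 - 4⁻¹ ^ N : ℝ)‖ₑ
  set u : ℕ → ℝ := fun j ↦ 4⁻¹ ^ (j + 1)
  set B : ℕ → Set ℂ := fun j ↦ ball ((1 - 2 * u j : ℝ) : ℂ) (u j)
  have hu_pos : ∀ j, 0 < u j := fun j ↦ by positivity
  have hu_le : ∀ j, u j ≤ 1 / 2 := fun j ↦ by
    calc u j ≤ 4⁻¹ := pow_le_of_le_one (by norm_num) (by norm_num) (by omega)
      _ ≤ 1 / 2 := by norm_num
  have hdisj : (Finset.range N : Set ℕ).PairwiseDisjoint B := by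
    refine ((pairwise_disjoint_on B).mpr fun i j hij ↦ ?_).set_pairwise _
    refine disjoint_ball_one_sub_two_mul ?_
    calc 3 * u j ≤ 4 * 4⁻¹ ^ (i + 2) := by
          gcongr
          · norm_num
          · exact pow_le_pow_of_le_one (by norm_num) (by norm_num) (by omega)
      _ = u i := by simp only [u]; ring
  calc (N : ℝ≥0∞) / 16 = ∑ _ ∈ Finset.range N, (16⁻¹ : ℝ≥0∞) := by
        rw [Finset.sum_const, Finset.card_range, nsmul_eq_mul, div_eq_mul_inv]
    _ ≤ ∑ j ∈ Finset.range N, ∫⁻ z in B j, K z ∂normalizedArea := by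
        refine Finset.sum_le_sum fun j hj ↦ inv_sixteen_le_setLIntegral_bergmanKernel (hu_pos j)
          (hu_le j) ?_ (by linarith [pow_pos (by norm_num : (0 : ℝ) < 4⁻¹) N])
        have : (4⁻¹ : ℝ) ^ N ≤ u j :=
          pow_le_pow_of_le_one (by norm_num) (by norm_num) (Finset.mem_range.mp hj)
        linarith
    _ = ∫⁻ z in ⋃ j ∈ Finset.range N, B j, K z ∂normalizedArea :=
        (lintegral_biUnion_finset hdisj (fun _ _ ↦ measurableSet_ball) _).symm
    _ ≤ ∫⁻ z in ball 0 1, K z ∂normalizedArea :=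
        lintegral_mono_set (iUnion₂_subset fun j _ z hz ↦ mem_ball_zero_iff.mpr
          ((norm_lt_of_mem_ball_one_sub_two_mul (hu_le j) hz).trans (by linarith [hu_pos j])))

/-- The Bergman projection `P(f)(z) = ∫_Δ f(ζ)/(1 - conj(ζ)z)² dm(ζ)` is not bounded on
`L¹(Δ, dm)` (`dm = dA/π`): there is no constant `C` with
`∫_Δ |P(f)| dm ≤ C ∫_Δ |f| dm` for all `f ∈ L¹(Δ, dm)`. -/
theorem bergman_projection_not_bounded_on_L1 :
    ¬ ∃ C : ℝ≥0, ∀ f : ℂ → ℂ, IntegrableOn f (ball (0 : ℂ) 1) →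
      (∫⁻ z in ball (0 : ℂ) 1,
          (‖(π : ℂ)⁻¹ * ∫ ζ in ball (0 : ℂ) 1,
              f ζ / (1 - (starRingEnd ℂ) ζ * z) ^ 2‖₊ : ℝ≥0∞)
          ∂((ENNReal.ofReal π)⁻¹ • volume)) ≤
        (C : ℝ≥0∞) *
          ∫⁻ z in ball (0 : ℂ) 1, (‖f z‖₊ : ℝ≥0∞) ∂((ENNReal.ofReal π)⁻¹ • volume) := by
  rintro ⟨C, hC⟩
  obtain ⟨N, hN⟩ := ENNReal.exists_nat_gt (by finiteness : (C : ℝ≥0∞) * 16 ≠ ⊤)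
  have hr : ‖((1 - 4⁻¹ ^ N : ℝ) : ℂ)‖ < 1 := by
    have h4 : (0 : ℝ) < 4⁻¹ ^ N := by positivity
    have h4' : (4⁻¹ : ℝ) ^ N ≤ 1 := pow_le_one₀ (by norm_num) (by norm_num)
    rw [Complex.norm_real, Real.norm_of_nonneg (by linarith)]
    linarith
  have hN_le : (N : ℝ≥0∞) / 16 ≤ C :=
    (natCast_div_sixteen_le_lintegral_bergmanKernel N).trans
      (lintegral_bergmanKernel_le_of_bounded hC hr)
  rw [ENNReal.div_le_iff_le_mul (by simp) (by simp)] at hN_le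
  exact hN.not_ge hN_le
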